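/- arXiv:1505.02453 — 2 statements merged into one kernel-verified Lean document; each statement's English description precedes it below -/
import Mathlib

section
/- Let $X_1$, $X_2$, $Y$ be real Banach spaces, let $r \geq 1$ be an integer, and let $F : \mathbb{R} \times X_1 \times X_2 \to Y$ be a map of class $C^{r+1}$; set $q = F(0,0,0)$ and let $L : X_1 \times X_2 \to Y$ denote the derivative of $F(0,\cdot,\cdot)$ at $(0,0)$. Assume: (a) $F(0,0,x_2) = q$ for all $x_2$ in a neighborhood of $0$ in $X_2$; (b) $\ker L = \{0\} \times X_2$ (in particular the partial derivative $L^{X_1} : X_1 \to Y$, $L^{X_1}(x_1) = L(x_1,0)$, is injective); (c) the partial derivative $\partial_t F(0,0,0)$ equals $L^{X_1}(w)$ for some $w \in X_1$; (d) the continuous linear map $X_1 \times X_2 \to Y$ given by $(\bar x_1, \bar x_2) \mapsto L^{X_1}(\bar x_1) + D^2F(0,0,0)[(1,-w,0),(0,0,\bar x_2)]$ is a Banach space isomorphism, where $D^2F(0,0,0)$ is the second derivative of $F$ at $(0,0,0)$ viewed as a bilinear map on $\mathbb{R} \times X_1 \times X_2$. Then there exist $\varepsilon > 0$ and curves $x_1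 : (-\varepsilon,\varepsilon) \to X_1$ and $x_2 : (-\varepsilon,\varepsilon) \to X_2$ of class $C^r$ such that $x_1(0) = 0$, $x_2(0) = 0$, $F(t, x_1(t), x_2(t)) = q$ for all $t \in (-\varepsilon,\varepsilon)$, and $x_1'(0) = -w$. -/
/-!
Blow up the degenerate direction: put `x₁ = t • (y₁ - w)`, `x₂ = y₂` and
`H (t, y) = F (t, t • (y₁ - w), y₂)`. Since `H (0, y) = F (0, 0, y₂) = q` near `y = 0`, the
equation `H = q` is equivalent, for `t ≠ 0`, to `g = 0`, where `g = (H (t, y) - H (0, y)) / t`,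
written as `∫₀¹ ∂ₜH (s t, y) ds` (Hadamard's lemma) so that it is `C^r` across `t = 0`.
Condition (c) says `g (0, 0) = 0`, and by symmetry of `D²F` the partial derivative `∂_y g (0, 0)`
is the isomorphism of (d). The ordinary implicit function theorem gives a `C^r` curve `y (t)` with
`g (t, y (t)) = 0`, and `x₁'(0) = y₁(0) - w = -w`.
-/

open Set Filter Topology

section PartialDerivatives

variable {𝕜 E₁ E₂ G : Type*} [NontriviallyNormedField 𝕜] [NormedAddCommGroup E₁]
  [NormedSpace 𝕜 E₁] [NormedAddCommGroup E₂] [NormedSpace 𝕜 E₂] [NormedAddCommGroup G]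
  [NormedSpace 𝕜 G]

theorem DifferentiableAt.hasFDerivAt_comp_prodMk_right {f : E₁ × E₂ → G} {a : E₁} {x : E₂}
    (hf : DifferentiableAt 𝕜 f (a, x)) :
    HasFDerivAt (fun y => f (a, y)) (fderiv 𝕜 f (a, x) ∘L .inr 𝕜 E₁ E₂) x :=
  hf.hasFDerivAt.comp x (hasFDerivAt_prodMk_right a x)

theorem DifferentiableAt.deriv_comp_prodMk_left {f : 𝕜 × E₂ → G} {t : 𝕜} {y : E₂}
    (hf : DifferentiableAt 𝕜 f (t, y)) : deriv (fun s => f (s, y)) t = fderiv 𝕜 f (t, y) (1, 0) :=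
  (hf.hasFDerivAt.comp_hasDerivAt t ((hasDerivAt_id t).prodMk (hasDerivAt_const t y))).deriv

end PartialDerivatives

theorem Continuous.exists_eventually_forall_norm_lt {X F : Type*} [TopologicalSpace X]
    [SeminormedAddGroup F] {K : ℝ × X → F} (hK : Continuous K) (a b : ℝ) (x₀ : X) :
    ∃ C, ∀ᶠ x in 𝓝 x₀, ∀ s ∈ uIcc a b, ‖K (s, x)‖ < C := by
  obtain ⟨C, hC⟩ := isCompact_uIcc.exists_bound_of_continuousOn
    (hK.comp (continuous_id.prodMk continuous_const) : Continuous fun s => K (s, x₀)).continuousOn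
  refine ⟨C + 1, isCompact_uIcc.eventually_forall_of_forall_eventually fun s hs => ?_⟩
  have hlt : ‖K (s, x₀)‖ < C + 1 := (hC s hs).trans_lt (lt_add_one C)
  exact (hK.comp continuous_swap).norm.continuousAt.eventually (gt_mem_nhds hlt)

section ParametricIntegral

variable {E F : Type*} [NormedAddCommGroup E] [NormedSpace ℝ E]
  [NormedAddCommGroup F] [NormedSpace ℝ F]

theorem hasFDerivAt_parametric_intervalIntegral_of_continuous {K : ℝ × E → F}
    {K' : ℝ × E → E →L[ℝ] F} (hK : Continuous K) (hK' : Continuous K')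
    (hKK' : ∀ s x, HasFDerivAt (fun y => K (s, y)) (K' (s, x)) x) (a b : ℝ) (x₀ : E) :
    HasFDerivAt (fun x => ∫ s in a..b, K (s, x)) (∫ s in a..b, K' (s, x₀)) x₀ := by
  obtain ⟨C, hC⟩ := hK'.exists_eventually_forall_norm_lt a b x₀
  have hKs (x : E) : Continuous fun s => K (s, x) := hK.comp (.prodMk_left x)
  refine intervalIntegral.hasFDerivAt_integral_of_dominated_of_fderiv_le
    (F := fun x s => K (s, x)) (F' := fun x s => K' (s, x)) (bound := fun _ => C)
    hC (Eventually.of_forall fun x => (hKs x).aestronglyMeasurable)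
    ((hKs x₀).intervalIntegrable a b) (hK'.comp (.prodMk_left x₀)).aestronglyMeasurable
    (Eventually.of_forall fun s hs x hx => (hx s (uIoc_subset_uIcc hs)).le)
    intervalIntegrable_const (Eventually.of_forall fun s _ x _ => hKK' s x)

end ParametricIntegral

universe u v

/-- The induction changes the target space from `F` to `E →L[ℝ] F`, which forces `F` into a universe
containing that of `E`; `contDiff_parametric_intervalIntegral_of_contDiff` lifts the restriction. -/
theorem contDiff_parametric_intervalIntegral_of_contDiff_aux {E : Type u} [NormedAddCommGroup E]
    [NormedSpace ℝ E] {F : Type max u v} [NormedAddCommGroup F] [NormedSpace ℝ F] (a b : ℝ) (n : ℕ)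
    {K : ℝ × E → F} (hK : ContDiff ℝ n K) : ContDiff ℝ n fun x => ∫ s in a..b, K (s, x) := by
  induction n generalizing F with
  | zero =>
    rw [Nat.cast_zero, contDiff_zero] at hK ⊢
    exact intervalIntegral.continuous_parametric_intervalIntegral_of_continuous'
      (f := fun x s => K (s, x)) (hK.comp continuous_swap) a b
  | succ n ih =>
    rw [Nat.cast_add_one, contDiff_succ_iff_fderiv] at hK ⊢
    obtain ⟨hKd, -, hK'⟩ := hK
    have hderiv := hasFDerivAt_parametric_intervalIntegral_of_continuous hKd.continuous
      (hK'.continuous.clm_comp continuous_const)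
      (fun s x => (hKd (s, x)).hasFDerivAt_comp_prodMk_right) a b
    refine ⟨fun x => (hderiv x).differentiableAt, by simp, ?_⟩
    rw [funext fun x => (hderiv x).fderiv]
    exact ih (hK'.clm_comp contDiff_const)

theorem contDiff_parametric_intervalIntegral_of_contDiff {E : Type u} {F : Type v}
    [NormedAddCommGroup E] [NormedSpace ℝ E] [NormedAddCommGroup F] [NormedSpace ℝ F] [CompleteSpace F]
    {n : ℕ} {K : ℝ × E → F} (hK : ContDiff ℝ n K) (a b : ℝ) :
    ContDiff ℝ n fun x => ∫ s in a..b, K (s, x) := by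
  let e := LinearIsometryEquiv.ulift ℝ F
  have hlift := contDiff_parametric_intervalIntegral_of_contDiff_aux (E := E) (F := ULift.{u} F)
    a b n (e.symm.toContinuousLinearEquiv.contDiff.comp hK)
  convert e.toContinuousLinearEquiv.contDiff.comp hlift using 1
  ext x
  simp only [Function.comp_apply, LinearIsometryEquiv.coe_toContinuousLinearEquiv]
  rw [← e.apply_symm_apply (∫ s in a..b, K (s, x))]
  exact congrArg e (e.symm.toLinearIsometry.intervalIntegral_comp_comm (μ := MeasureTheory.volume)
    (fun s => K (s, x))).symm

section Hadamard

variable {E Y : Type*} [NormedAddCommGroup E] [NormedSpace ℝ E]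
  [NormedAddCommGroup Y] [NormedSpace ℝ Y]

/-- A smooth version of `(f (t, y) - f (0, y)) / t` that stays meaningful at `t = 0`. -/
noncomputable def hadamardQuotient (f : ℝ × E → Y) (p : ℝ × E) : Y :=
  ∫ s in (0 : ℝ)..1, fderiv ℝ f (s * p.1, p.2) (1, 0)

variable [CompleteSpace Y]

theorem hadamardQuotient_zero_fst (f : ℝ × E → Y) (y : E) :
    hadamardQuotient f (0, y) = fderiv ℝ f (0, y) (1, 0) := by
  simp [hadamardQuotient]

theorem ContDiff.hadamardQuotient {f : ℝ × E → Y} {n : ℕ}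
    (hf : ContDiff ℝ (n + 1) f) : ContDiff ℝ n (hadamardQuotient f) := by
  have hf' : ContDiff ℝ n (fderiv ℝ f) := hf.fderiv_right le_rfl
  have hscale : ContDiff ℝ n fun q : ℝ × ℝ × E => (q.1 * q.2.1, q.2.2) := by fun_prop
  exact contDiff_parametric_intervalIntegral_of_contDiff
    ((hf'.comp hscale).clm_apply contDiff_const) 0 1

theorem fst_smul_hadamardQuotient {f : ℝ × E → Y} (hf : ContDiff ℝ 1 f)
    (p : ℝ × E) : p.1 • hadamardQuotient f p = f p - f (0, p.2) := by
  obtain ⟨t, y⟩ := p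
  have hderiv (s : ℝ) : HasDerivAt (fun s : ℝ => f (s * t, y))
      (t • fderiv ℝ f (s * t, y) (1, 0)) s := by
    have hline : HasDerivAt (fun s : ℝ => (s * t, y)) (t • ((1 : ℝ), (0 : E))) s := by
      simpa using (hasDerivAt_mul_const t).prodMk (hasDerivAt_const s y)
    exact (((hf.differentiable one_ne_zero) (s * t, y)).hasFDerivAt.comp_hasDerivAt s
      hline).congr_deriv (map_smul _ _ _)
  have hcont : Continuous fun s : ℝ => t • fderiv ℝ f (s * t, y) (1, 0) := by
    have := hf.continuous_fderiv one_ne_zero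
    fun_prop
  have hFTC := intervalIntegral.integral_eq_sub_of_hasDerivAt (fun s _ => hderiv s)
    (hcont.intervalIntegrable 0 1)
  simpa [hadamardQuotient, intervalIntegral.integral_smul] using hFTC

end Hadamard

section BlowUp

variable {X₁ X₂ Y : Type*} [NormedAddCommGroup X₁] [NormedSpace ℝ X₁]
  [NormedAddCommGroup X₂] [NormedSpace ℝ X₂] [NormedAddCommGroup Y] [NormedSpace ℝ Y]

def blowUp (w : X₁) (p : ℝ × X₁ × X₂) : ℝ × X₁ × X₂ :=
  (p.1, p.1 • (p.2.1 - w), p.2.2)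

theorem contDiff_blowUp (w : X₁) {n : WithTop ℕ∞} : ContDiff ℝ n (blowUp (X₂ := X₂) w) := by
  unfold blowUp
  fun_prop

theorem hasDerivAt_blowUp_zero (w : X₁) (y : X₁ × X₂) :
    HasDerivAt (fun t => blowUp w (t, y)) (1, y.1 - w, 0) 0 := by
  simpa [blowUp] using (hasDerivAt_id (0 : ℝ)).prodMk
    (((hasDerivAt_id (0 : ℝ)).smul_const (y.1 - w)).prodMk (hasDerivAt_const (0 : ℝ) y.2))

variable {F : ℝ × X₁ × X₂ → Y} {w : X₁}

theorem apply_blowUp_eq_of_hadamardQuotient_eq_zero [CompleteSpace Y] (hF : ContDiff ℝ 1 F)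
    {p : ℝ × X₁ × X₂} (hp : hadamardQuotient (F ∘ blowUp w) p = 0) :
    F (blowUp w p) = F (0, 0, p.2.2) := by
  have := fst_smul_hadamardQuotient (hF.comp (contDiff_blowUp w)) p
  rw [hp, smul_zero, eq_comm, sub_eq_zero] at this
  simpa [blowUp] using this

theorem hadamardQuotient_comp_blowUp_zero_fst [CompleteSpace Y] (hF : Differentiable ℝ F)
    (y : X₁ × X₂) :
    hadamardQuotient (F ∘ blowUp w) (0, y) = fderiv ℝ F (0, 0, y.2) (1, y.1 - w, 0) := by
  have hcomp : Differentiable ℝ (F ∘ blowUp w) :=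
    hF.comp ((contDiff_blowUp w).differentiable one_ne_zero)
  rw [hadamardQuotient_zero_fst, ← (hcomp (0, y)).deriv_comp_prodMk_left]
  have hF0 : HasFDerivAt F (fderiv ℝ F (0, 0, y.2)) (blowUp w (0, y)) := by
    simpa [blowUp] using (hF (0, 0, y.2)).hasFDerivAt
  exact (hF0.comp_hasDerivAt 0 (hasDerivAt_blowUp_zero w y)).deriv

theorem fderiv_slice_eq_fderiv_comp_inr (hF : DifferentiableAt ℝ F (0, 0, 0)) :
    fderiv ℝ (fun p : X₁ × X₂ => F (0, p.1, p.2)) (0, 0) = fderiv ℝ F (0, 0, 0) ∘L .inr ℝ ℝ _ :=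
  hF.hasFDerivAt_comp_prodMk_right.fderiv

theorem hadamardQuotient_comp_blowUp_zero [CompleteSpace Y] (hF : Differentiable ℝ F)
    (hc : deriv (fun t => F (t, 0, 0)) 0
      = fderiv ℝ (fun p : X₁ × X₂ => F (0, p.1, p.2)) (0, 0) (w, 0)) :
    hadamardQuotient (F ∘ blowUp w) (0, 0, 0) = 0 := by
  rw [(hF (0, 0, 0)).deriv_comp_prodMk_left (y := (0, 0)), fderiv_slice_eq_fderiv_comp_inr (hF _)]
    at hc
  have hdir : ((1 : ℝ), (0 : X₁) - w, (0 : X₂)) = (1, 0, 0) - (0, w, 0) := by simp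
  rw [hadamardQuotient_comp_blowUp_zero_fst hF, hdir, map_sub]
  exact sub_eq_zero.2 hc

theorem hasFDerivAt_hadamardQuotient_comp_blowUp_zero_prodMk [CompleteSpace Y]
    (hF : ContDiff ℝ 2 F) {e : X₁ × X₂ →L[ℝ] Y} (he : ∀ x₁ x₂, e (x₁, x₂) =
      fderiv ℝ (fun p : X₁ × X₂ => F (0, p.1, p.2)) (0, 0) (x₁, 0)
        + fderiv ℝ (fderiv ℝ F) (0, 0, 0) (1, -w, 0) (0, 0, x₂)) :
    HasFDerivAt (fun y => hadamardQuotient (F ∘ blowUp w) (0, y)) e (0, 0) := by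
  rw [funext (hadamardQuotient_comp_blowUp_zero_fst (hF.differentiable two_ne_zero))]
  have hsymm : IsSymmSndFDerivAt ℝ F (0, 0, 0) :=
    hF.contDiffAt.isSymmSndFDerivAt (by simp [minSmoothness_of_isRCLikeNormedField])
  have hF' : HasFDerivAt (fderiv ℝ F) (fderiv ℝ (fderiv ℝ F) (0, 0, 0)) (0, 0, 0) :=
    ((hF.fderiv_right (m := 1) le_rfl).differentiable one_ne_zero _).hasFDerivAt
  have hbase : HasFDerivAt (fun y : X₁ × X₂ => ((0 : ℝ), (0 : X₁), y.2))
      ((0 : X₁ × X₂ →L[ℝ] ℝ).prod ((0 : X₁ × X₂ →L[ℝ] X₁).prod (.snd ℝ X₁ X₂))) (0, 0) :=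
    (hasFDerivAt_const _ _).prodMk ((hasFDerivAt_const _ _).prodMk hasFDerivAt_snd)
  have hdir : HasFDerivAt (fun y : X₁ × X₂ => ((1 : ℝ), y.1 - w, (0 : X₂)))
      ((0 : X₁ × X₂ →L[ℝ] ℝ).prod ((ContinuousLinearMap.fst ℝ X₁ X₂).prod 0)) (0, 0) :=
    (hasFDerivAt_const _ _).prodMk ((hasFDerivAt_fst.sub_const w).prodMk (hasFDerivAt_const _ _))
  refine ((hF'.comp (f := fun y : X₁ × X₂ => ((0 : ℝ), (0 : X₁), y.2)) (0, 0) hbase).clm_apply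
    hdir).congr_fderiv (ContinuousLinearMap.ext fun ⟨x₁, x₂⟩ => ?_)
  simp [he, fderiv_slice_eq_fderiv_comp_inr (hF.differentiable two_ne_zero _), hsymm _ (0, 0, x₂)]

theorem fderiv_hadamardQuotient_comp_blowUp_comp_inr [CompleteSpace Y] (hF : ContDiff ℝ 2 F)
    {e : X₁ × X₂ →L[ℝ] Y} (he : ∀ x₁ x₂, e (x₁, x₂) =
      fderiv ℝ (fun p : X₁ × X₂ => F (0, p.1, p.2)) (0, 0) (x₁, 0)
        + fderiv ℝ (fderiv ℝ F) (0, 0, 0) (1, -w, 0) (0, 0, x₂)) :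
    fderiv ℝ (hadamardQuotient (F ∘ blowUp w)) (0, 0, 0) ∘L .inr ℝ ℝ (X₁ × X₂) = e :=
  (((hF.comp (contDiff_blowUp w)).hadamardQuotient (n := 1)).differentiable one_ne_zero
    _).hasFDerivAt_comp_prodMk_right.unique
      (hasFDerivAt_hadamardQuotient_comp_blowUp_zero_prodMk hF he)

theorem exists_curve_of_hadamardQuotient_comp_blowUp_eq_zero [CompleteSpace Y]
    (hF : ContDiff ℝ 1 F) {q : Y} (ha : ∀ᶠ x₂ in 𝓝 (0 : X₂), F (0, 0, x₂) = q) {r : ℕ}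
    (hr : r ≠ 0) {y : ℝ → X₁ × X₂} (hy : ContDiffAt ℝ r y 0) (hy0 : y 0 = (0, 0))
    (hsol : ∀ᶠ t in 𝓝 0, hadamardQuotient (F ∘ blowUp w) (t, y t) = 0) :
    ∃ ε > (0 : ℝ), ∃ x₁ : ℝ → X₁, ∃ x₂ : ℝ → X₂,
      ContDiffOn ℝ r x₁ (Ioo (-ε) ε) ∧ ContDiffOn ℝ r x₂ (Ioo (-ε) ε) ∧
      x₁ 0 = 0 ∧ x₂ 0 = 0 ∧ (∀ t ∈ Ioo (-ε) ε, F (t, x₁ t, x₂ t) = q) ∧ deriv x₁ 0 = -w := by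
  have hr0 : (r : WithTop ℕ∞) ≠ 0 := by exact_mod_cast hr
  have hy₂ : Tendsto (fun t => (y t).2) (𝓝 0) (𝓝 0) := by
    simpa [hy0] using hy.continuousAt.snd.tendsto
  obtain ⟨ε, hε, hball⟩ := Metric.eventually_nhds_iff_ball.1
    ((hy.eventually (by simp)).and (hsol.and (hy₂.eventually ha)))
  rw [Real.ball_eq_Ioo, zero_sub, zero_add] at hball
  refine ⟨ε, hε, fun t => t • ((y t).1 - w), fun t => (y t).2, fun t ht => ?_,
    fun t ht => (hball t ht).1.snd.contDiffWithinAt, by simp, by simp [hy0], fun t ht => ?_, ?_⟩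
  · exact (contDiffAt_id.smul ((hball t ht).1.fst.sub contDiffAt_const)).contDiffWithinAt
  · rw [← (hball t ht).2.2]
    exact apply_blowUp_eq_of_hadamardQuotient_eq_zero hF (hball t ht).2.1
  · have hx₁ := (hasDerivAt_id' (0 : ℝ)).smul ((hy.differentiableAt hr0).fst.hasDerivAt.sub_const w)
    exact hx₁.deriv.trans (by simp [hy0])

end BlowUp

theorem degenerate_implicit_function_theorem_general
    {X₁ X₂ Y : Type*}
    [NormedAddCommGroup X₁] [NormedSpace ℝ X₁] [CompleteSpace X₁]
    [NormedAddCommGroup X₂] [NormedSpace ℝ X₂] [CompleteSpace X₂]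
    [NormedAddCommGroup Y] [NormedSpace ℝ Y] [CompleteSpace Y]
    (r : ℕ) (hr : 1 ≤ r)
    (F : ℝ × X₁ × X₂ → Y)
    (hF : ContDiff ℝ (r + 1) F)
    (q : Y)
    (L : (X₁ × X₂) →L[ℝ] Y)
    (hL : L = fderiv ℝ (fun p : X₁ × X₂ => F (0, p.1, p.2)) (0, 0))
    -- (a) `F(0,0,x₂) = q` for all `x₂` in a neighborhood of `0` in `X₂`
    (ha : ∀ᶠ x₂ in nhds (0 : X₂), F (0, 0, x₂) = q)
    -- (c) `∂ₜF(0,0,0) = L(w,0)` for some `w ∈ X₁`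
    (w : X₁)
    (hc : deriv (fun t : ℝ => F (t, 0, 0)) 0 = L (w, 0))
    -- (d) `(x̄₁, x̄₂) ↦ L(x̄₁,0) + D²F(0,0,0)[(1,-w,0),(0,0,x̄₂)]` is a Banach space isomorphism
    (hd : ∃ e : (X₁ × X₂) ≃L[ℝ] Y, ∀ x₁ : X₁, ∀ x₂ : X₂,
        e (x₁, x₂) = L (x₁, 0)
          + fderiv ℝ (fderiv ℝ F) (0, 0, 0) (1, -w, 0) (0, 0, x₂)) :
    ∃ ε > (0 : ℝ), ∃ x₁ : ℝ → X₁, ∃ x₂ : ℝ → X₂,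
      ContDiffOn ℝ r x₁ (Set.Ioo (-ε) ε) ∧
      ContDiffOn ℝ r x₂ (Set.Ioo (-ε) ε) ∧
      x₁ 0 = 0 ∧ x₂ 0 = 0 ∧
      (∀ t ∈ Set.Ioo (-ε) ε, F (t, x₁ t, x₂ t) = q) ∧
      deriv x₁ 0 = -w := by
  obtain ⟨e, he⟩ := hd
  subst hL
  have hr0 : (r : WithTop ℕ∞) ≠ 0 := by exact_mod_cast (by omega : r ≠ 0)
  have hF2 : ContDiff ℝ 2 F := hF.of_le (by exact_mod_cast Nat.add_le_add_right hr 1)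
  have hg : ContDiffAt ℝ r (hadamardQuotient (F ∘ blowUp w)) (0, 0, 0) :=
    (hF.comp (contDiff_blowUp w)).hadamardQuotient.contDiffAt
  have hinv : (fderiv ℝ (hadamardQuotient (F ∘ blowUp w)) (0, 0, 0)
      ∘L .inr ℝ ℝ (X₁ × X₂)).IsInvertible := by
    rw [fderiv_hadamardQuotient_comp_blowUp_comp_inr hF2 (e := e) he]
    exact ContinuousLinearMap.isInvertible_equiv
  refine exists_curve_of_hadamardQuotient_comp_blowUp_eq_zero (hF2.of_le one_le_two) ha
    (by omega) (hg.contDiffAt_implicitFunction hr0 hinv)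
    (hg.implicitFunction_apply_self hr0 hinv) ?_
  rw [← hadamardQuotient_comp_blowUp_zero (hF2.differentiable two_ne_zero) hc]
  exact hg.eventually_apply_implicitFunction hr0 hinv

/-- Degenerate implicit function theorem (coordinate/product form), Theorem 2 of the paper,
with the submanifold `M` realized as `{0} × X₂`, the point `p = (0,0)` and `v = (w, 0)`. -/
theorem degenerate_implicit_function_theorem
    {X₁ X₂ Y : Type*}
    [NormedAddCommGroup X₁] [NormedSpace ℝ X₁] [CompleteSpace X₁]
    [NormedAddCommGroup X₂] [NormedSpace ℝ X₂] [CompleteSpace X₂]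
    [NormedAddCommGroup Y] [NormedSpace ℝ Y] [CompleteSpace Y]
    (r : ℕ) (hr : 1 ≤ r)
    (F : ℝ × X₁ × X₂ → Y)
    (hF : ContDiff ℝ (r + 1) F)
    (q : Y) (hq : q = F (0, 0, 0))
    (L : (X₁ × X₂) →L[ℝ] Y)
    (hL : L = fderiv ℝ (fun p : X₁ × X₂ => F (0, p.1, p.2)) (0, 0))
    -- (a) `F(0,0,x₂) = q` for all `x₂` in a neighborhood of `0` in `X₂`
    (ha : ∀ᶠ x₂ in nhds (0 : X₂), F (0, 0, x₂) = q)
    -- (b) `ker L = {0} × X₂`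
    (hb : LinearMap.ker (L : (X₁ × X₂) →ₗ[ℝ] Y)
        = (⊥ : Submodule ℝ X₁).prod (⊤ : Submodule ℝ X₂))
    -- (c) `∂ₜF(0,0,0) = L(w,0)` for some `w ∈ X₁`
    (w : X₁)
    (hc : deriv (fun t : ℝ => F (t, 0, 0)) 0 = L (w, 0))
    -- (d) `(x̄₁, x̄₂) ↦ L(x̄₁,0) + D²F(0,0,0)[(1,-w,0),(0,0,x̄₂)]` is a Banach space isomorphism
    (hd : ∃ e : (X₁ × X₂) ≃L[ℝ] Y, ∀ x₁ : X₁, ∀ x₂ : X₂,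
        e (x₁, x₂) = L (x₁, 0)
          + fderiv ℝ (fderiv ℝ F) (0, 0, 0) (1, -w, 0) (0, 0, x₂)) :
    ∃ ε > (0 : ℝ), ∃ x₁ : ℝ → X₁, ∃ x₂ : ℝ → X₂,
      ContDiffOn ℝ r x₁ (Set.Ioo (-ε) ε) ∧
      ContDiffOn ℝ r x₂ (Set.Ioo (-ε) ε) ∧
      x₁ 0 = 0 ∧ x₂ 0 = 0 ∧
      (∀ t ∈ Set.Ioo (-ε) ε, F (t, x₁ t, x₂ t) = q) ∧
      deriv x₁ 0 = -w :=
  degenerate_implicit_function_theorem_general r hr F hF q L hL ha w hc hd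
end

section
/- Let $A$ and $B$ be real $n \times n$ matrices and let $\mu \in \mathbb{C}$ be a simple zero of the complex polynomial $\chi(s) = \det(A - sB)$ (i.e., $\chi(\mu) = 0$ and $\chi'(\mu) \neq 0$), where the determinant is computed over $\mathbb{C}$. Then the complex kernels $\ker_{\mathbb{C}}(A - \mu B)$ and $\ker_{\mathbb{C}}((A - \mu B)^T)$ are both one-dimensional over $\mathbb{C}$, and for every nonzero $v \in \ker_{\mathbb{C}}(A - \mu B)$ and every nonzero $w \in \ker_{\mathbb{C}}((A - \mu B)^T)$ one has $w^T B v \neq 0$. -/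
/-!
Put `q = det (M - X • B) ∈ K[X]` and let `a` be a root. If `M - X • B` sends polynomial vectors
`c j`, whose values at `a` form a basis, to multiples of `(X - a) ^ d j`, then
`(X - a) ^ ∑ d j` divides `q · det (c)`, hence `q`, as `det (c)` does not vanish at `a`.
Taking for the `c j` a basis extending a basis of `ker (M - a • B)` gives
`(X - a) ^ dim ker ∣ q`; taking a basis through a kernel vector `v` and replacing `v` by
`v + (X - a) • u`, where `(M - a • B) u = B v`, gives `(X - a) ^ 2 ∣ q`.
At a simple root `(X - a) ^ 2 ∤ q`, so the kernel is a line and no such `u` exists; as the range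
of `M - a • B` is the annihilator of a left kernel vector `w`, this says `wᵀ B v ≠ 0`.
The left kernel is handled by transposing, which does not change `q`.
-/

open Matrix Polynomial Module LinearMap

theorem LinearIndependent.exists_basis_extending {K ι κ : Type*} [Field K] [Fintype ι]
    {v : κ → ι → K} (hv : LinearIndependent K v) :
    ∃ (b : Basis ι K (ι → K)) (f : κ ↪ ι), ∀ k, b (f k) = v k := by
  have hs := hv.linearIndepOn_id
  let e := (Basis.extend hs).indexEquiv (Pi.basisFun K ι)
  have mem k : v k ∈ hs.extend (Set.subset_univ _) := hs.subset_extend _ ⟨k, rfl⟩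
  refine ⟨(Basis.extend hs).reindex e, ⟨fun k => e ⟨v k, mem k⟩, fun k l hkl => ?_⟩,
    fun k => ?_⟩
  · exact hv.injective (congrArg Subtype.val (e.injective hkl))
  · simp only [Basis.reindex_apply, Basis.extend_apply_self]
    exact congrArg Subtype.val (e.symm_apply_apply _)

namespace Matrix

section CommRing

variable {R ι : Type*} [CommRing R]

noncomputable def pencil (M B : Matrix ι ι R) : Matrix ι ι R[X] :=
  M.map C - (X : R[X]) • B.map C

theorem eval_det_pencil [Fintype ι] [DecidableEq ι] (M B : Matrix ι ι R) (s : R) :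
    (pencil M B).det.eval s = (M - s • B).det := by
  rw [← coe_evalRingHom, RingHom.map_det]
  congr 1
  ext i j
  simp only [pencil, RingHom.mapMatrix_apply, coe_evalRingHom, map_apply, sub_apply, smul_apply,
    smul_eq_mul, X_mul_C, eval_sub, eval_C, eval_mul, eval_X]
  ring

theorem pencil_transpose (M B : Matrix ι ι R) : pencil Mᵀ Bᵀ = (pencil M B)ᵀ := by
  simp [pencil, transpose_map]

theorem pencil_mulVec_comp_C [Fintype ι] (M B : Matrix ι ι R) (a : R) (v : ι → R) :
    pencil M B *ᵥ (C ∘ v) = C ∘ ((M - a • B) *ᵥ v) - (X - C a) • C ∘ (B *ᵥ v) := by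
  ext1 i
  simp only [pencil, sub_mulVec, smul_mulVec, Pi.sub_apply, ← RingHom.map_mulVec, Pi.smul_apply,
    smul_eq_mul, X_mul_C, map_comp_sub, Function.comp_apply, map_mul]
  ring

theorem pow_sum_dvd_det [Fintype ι] [DecidableEq ι] (Q : Matrix ι ι R) (x : R) (d : ι → ℕ)
    (h : ∀ i j, x ^ d j ∣ Q i j) : x ^ ∑ j, d j ∣ Q.det := by
  rw [det_apply]
  refine Finset.dvd_sum fun σ _ => ?_
  rw [Units.smul_def, zsmul_eq_mul, ← Finset.prod_pow_eq_pow_sum]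
  exact Dvd.dvd.mul_left (Finset.prod_dvd_prod_of_dvd _ _ fun j _ => h (σ j) j) _

end CommRing

section Field

variable {K ι : Type*} [Field K] [Fintype ι] [DecidableEq ι]

theorem X_sub_C_pow_sum_dvd_det (N : Matrix ι ι K[X]) (a : K) (c : ι → ι → K[X])
    (hc : LinearIndependent K fun j i => (c j i).eval a) (d : ι → ℕ)
    (hdvd : ∀ i j, (X - C a) ^ d j ∣ (N *ᵥ c j) i) :
    (X - C a) ^ ∑ j, d j ∣ N.det := by
  set P : Matrix ι ι K[X] := of fun i j => c j i
  have hP : ¬ X - C a ∣ P.det := by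
    rw [dvd_iff_isRoot, IsRoot, ← coe_evalRingHom, RingHom.map_det]
    exact ((isUnit_iff_isUnit_det _).mp (linearIndependent_cols_iff_isUnit.mp hc)).ne_zero
  have hNP : (X - C a) ^ ∑ j, d j ∣ N.det * P.det := by
    rw [← det_mul]
    exact pow_sum_dvd_det _ _ d hdvd
  exact (prime_X_sub_C a).pow_dvd_of_dvd_mul_right _ hP hNP

theorem X_sub_C_pow_finrank_ker_dvd_det_pencil (M B : Matrix ι ι K) (a : K) :
    (X - C a) ^ finrank K (ker (M - a • B).mulVecLin) ∣ (pencil M B).det := by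
  set V := ker (M - a • B).mulVecLin
  obtain ⟨b, f, hbf⟩ :=
    ((finBasis K V).linearIndependent.map' V.subtype V.ker_subtype).exists_basis_extending
  have hsum : ∑ j, (if j ∈ Finset.univ.map f then 1 else 0) = finrank K V := by
    simp [Finset.card_image_of_injective _ f.injective]
  rw [← hsum]
  refine X_sub_C_pow_sum_dvd_det _ a (fun j => C ∘ b j) (by simpa using b.linearIndependent) _
    fun i j => ?_
  split_ifs with hj
  · obtain ⟨k, -, rfl⟩ := Finset.mem_map.mp hj
    have hk : (M - a • B) *ᵥ b (f k) = 0 := by rw [hbf]; exact (finBasis K V k).2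
    simp [pencil_mulVec_comp_C _ _ a, hk]
  · rw [pow_zero]
    exact one_dvd _

theorem X_sub_C_sq_dvd_det_pencil_of_mulVec_eq (M B : Matrix ι ι K) (a : K) {v u : ι → K}
    (hv : v ≠ 0) (hMv : (M - a • B) *ᵥ v = 0) (hMu : (M - a • B) *ᵥ u = B *ᵥ v) :
    (X - C a) ^ 2 ∣ (pencil M B).det := by
  have hv' : LinearIndependent K fun _ : Unit => v := linearIndependent_unique_iff.mpr hv
  obtain ⟨b, f, hbf⟩ := hv'.exists_basis_extending
  set j₀ := f ()
  have hb₀ : b j₀ = v := hbf ()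
  let c : ι → ι → K[X] := Function.update (fun j => C ∘ b j) j₀ (C ∘ v + (X - C a) • C ∘ u)
  have hc : (fun j i => (c j i).eval a) = b := by
    ext j i
    rcases eq_or_ne j j₀ with rfl | hj
    · simp [c, hb₀]
    · simp [c, hj]
  have hcol : pencil M B *ᵥ c j₀ = -(X - C a) ^ 2 • C ∘ (B *ᵥ u) := by
    simp only [c, Function.update_self, mulVec_add, pencil_mulVec_comp_C _ _ a, hMv, Pi.comp_zero,
      map_zero, Function.const_zero, zero_sub, mulVec_smul, hMu, neg_smul]
    module
  simpa using X_sub_C_pow_sum_dvd_det _ a c (hc ▸ b.linearIndependent) (Pi.single j₀ 2)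
    fun i j => by
      rcases eq_or_ne j j₀ with rfl | hj
      · simp [hcol]
      · simp [hj]

theorem finrank_ker_eq_one_of_not_sq_dvd (M B : Matrix ι ι K) (a : K)
    (hdet : (M - a • B).det = 0) (hsimple : ¬ (X - C a) ^ 2 ∣ (pencil M B).det) :
    finrank K (ker (M - a • B).mulVecLin) = 1 := by
  refine le_antisymm (not_lt.mp fun h => hsimple ?_) ?_
  · exact (pow_dvd_pow _ h).trans (X_sub_C_pow_finrank_ker_dvd_det_pencil M B a)
  · obtain ⟨v, hv, hMv⟩ := exists_mulVec_eq_zero_iff.mpr hdet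
    exact Submodule.one_le_finrank_iff.mpr ((Submodule.ne_bot_iff _).mpr ⟨v, hMv, hv⟩)

theorem mem_range_mulVecLin_of_dotProduct_eq_zero {M : Matrix ι ι K}
    (hM : finrank K (ker M.mulVecLin) = 1) {w : ι → K} (hw : w ≠ 0) (hMw : Mᵀ *ᵥ w = 0)
    {x : ι → K} (hx : w ⬝ᵥ x = 0) : x ∈ range M.mulVecLin := by
  set ℓ := dotProductEquiv K ι w
  have hℓ : ℓ ≠ 0 := (dotProductEquiv K ι).map_ne_zero_iff.mpr hw
  have hle : range M.mulVecLin ≤ ker ℓ := by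
    rintro _ ⟨u, rfl⟩
    simp [ℓ, dotProduct_mulVec, ← mulVec_transpose, hMw]
  have hrange : range M.mulVecLin = ker ℓ := by
    refine Submodule.eq_of_le_of_finrank_eq hle ?_
    have := finrank_range_add_finrank_ker M.mulVecLin
    have := Module.Dual.finrank_ker_add_one_of_ne_zero hℓ
    omega
  exact hrange ▸ hx

theorem dotProduct_mulVec_ne_zero_of_not_sq_dvd (M B : Matrix ι ι K) (a : K)
    (hdet : (M - a • B).det = 0) (hsimple : ¬ (X - C a) ^ 2 ∣ (pencil M B).det) {v w : ι → K}
    (hv : v ≠ 0) (hw : w ≠ 0) (hMv : (M - a • B) *ᵥ v = 0) (hMw : (M - a • B)ᵀ *ᵥ w = 0) :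
    w ⬝ᵥ (B *ᵥ v) ≠ 0 := fun h => by
  obtain ⟨u, hu⟩ := mem_range_mulVecLin_of_dotProduct_eq_zero
    (finrank_ker_eq_one_of_not_sq_dvd M B a hdet hsimple) hw hMw h
  exact hsimple (X_sub_C_sq_dvd_det_pencil_of_mulVec_eq M B a hv hMv hu)

end Field

end Matrix

/-- Complex-branch variant (Remark 2 of the paper): if `μ ∈ ℂ` is a simple zero of
`χ(s) = det(A - sB)` computed over `ℂ` (with `A`, `B` real matrices regarded as complex),
then the complex kernels of `A - μB` and of its transpose are one-dimensional over `ℂ`,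
and `wᵀBv ≠ 0` for nonzero kernel vectors `v`, `w`. -/
theorem simple_zero_det_pencil_complex
    {n : ℕ} (A B : Matrix (Fin n) (Fin n) ℝ)
    (χ : ℂ → ℂ)
    (hχ : ∀ s : ℂ,
      χ s = (A.map (Complex.ofReal) - s • B.map (Complex.ofReal)).det)
    (μ : ℂ) (hμ : χ μ = 0) (hμ' : deriv χ μ ≠ 0) :
    Module.finrank ℂ
      (LinearMap.ker (A.map (Complex.ofReal) - μ • B.map (Complex.ofReal)).mulVecLin) = 1 ∧
    Module.finrank ℂ
      (LinearMap.ker ((A.map (Complex.ofReal) - μ • B.map (Complex.ofReal))ᵀ).mulVecLin) = 1 ∧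
    ∀ v w : Fin n → ℂ, v ≠ 0 → w ≠ 0 →
      (A.map (Complex.ofReal) - μ • B.map (Complex.ofReal)) *ᵥ v = 0 →
      (A.map (Complex.ofReal) - μ • B.map (Complex.ofReal))ᵀ *ᵥ w = 0 →
      w ⬝ᵥ (B.map (Complex.ofReal) *ᵥ v) ≠ 0 := by
  set Ac := A.map Complex.ofReal
  set Bc := B.map Complex.ofReal
  have hχ_eval : χ = fun s => (pencil Ac Bc).det.eval s := funext fun s => by
    rw [hχ, eval_det_pencil]
  have hdet : (Ac - μ • Bc).det = 0 := hχ μ ▸ hμ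
  have hsimple : ¬ (X - C μ) ^ 2 ∣ (pencil Ac Bc).det := fun h => hμ' <| by
    rw [hχ_eval, Polynomial.deriv, ← IsRoot, ← dvd_iff_isRoot]
    simpa using pow_sub_one_dvd_derivative_of_pow_dvd h
  have hdet_transpose : (Acᵀ - μ • Bcᵀ).det = 0 := by
    rwa [← transpose_smul, ← transpose_sub, det_transpose]
  have hsimple_transpose : ¬ (X - C μ) ^ 2 ∣ (pencil Acᵀ Bcᵀ).det := by
    rwa [pencil_transpose, det_transpose]
  refine ⟨finrank_ker_eq_one_of_not_sq_dvd _ _ _ hdet hsimple, ?_, fun v w hv hw hMv hMw =>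
    dotProduct_mulVec_ne_zero_of_not_sq_dvd _ _ _ hdet hsimple hv hw hMv hMw⟩
  rw [transpose_sub, transpose_smul]
  exact finrank_ker_eq_one_of_not_sq_dvd _ _ _ hdet_transpose hsimple_transpose
end
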